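/- arXiv:1906.05951 — 2 statements merged into one kernel-verified Lean document; each statement's English description precedes it below -/
import Mathlib

section
/- In the setting where G(x) is a q×p polynomial matrix with lowest-degree row matrix Ḡ(x) in echelon form, r is the rank of Ḡ, U ∈ F_p, M_T(y,U) = Δ_T G(T^{−1/2}y) U G(T^{−1/2}y)ᵀ Δ_T has ordered eigenvalues λ̄_l^{(T)}(y,U), β_l are the exponents and λ_l(y,U) the limit functions of Proposition 2, and m_l(U), m_l are the lowest homogeneity degrees of the characteristic-polynomial coefficients: if U_T ∈ F_p is a sequence with U_T → U and m_l(U) = m_l for all l = 1,…,q, then T^{β_l} λ̄_l^{(T)}(y,U_T) → λ_l(y,U) as T → ∞ for almost every y ∈ ℝ^p and every l = 1,…,q, and λ_l(y,U) > 0 for almost every y. -/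
open MeasureTheory Filter Topology Matrix

noncomputable section

/-- Evaluate a matrix of multivariate real polynomials at a point `x ∈ ℝ^p`. -/
def evalMat {q p : ℕ} (G : Matrix (Fin q) (Fin p) (MvPolynomial (Fin p) ℝ)) (x : Fin p → ℝ) :
    Matrix (Fin q) (Fin p) ℝ :=
  Matrix.of fun i j => MvPolynomial.eval x (G i j)

/-- A matrix over a commutative ring has rank at least `k` if it has a `k × k` submatrix whose
determinant is nonzero (for polynomial matrices: a not-identically-zero polynomial). -/
def rankGe {m n R : Type*} [Fintype m] [Fintype n] [CommRing R]
    (G : Matrix m n R) (k : ℕ) : Prop :=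
  ∃ (r : Fin k → m) (c : Fin k → n), Function.Injective r ∧ Function.Injective c ∧
    (G.submatrix r c).det ≠ 0

/-- `r` is the rank of the matrix `G` over a commutative ring: the largest dimension of a
square submatrix with nonzero determinant. -/
def IsPolyRank {m n R : Type*} [Fintype m] [Fintype n] [CommRing R]
    (G : Matrix m n R) (r : ℕ) : Prop :=
  rankGe G r ∧ ¬ rankGe G (r + 1)

/-- The lowest degree of a nonzero homogeneous component of a multivariate polynomial. -/
def lowDeg {p : ℕ} (h : MvPolynomial (Fin p) ℝ) : ℕ :=
  sInf {d | MvPolynomial.homogeneousComponent d h ≠ 0}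

/-- The minimal degree of a nonzero monomial among the entries of row `l` of `G`. -/
def rowDeg {q p : ℕ} (G : Matrix (Fin q) (Fin p) (MvPolynomial (Fin p) ℝ)) (l : Fin q) : ℕ :=
  sInf {d | ∃ j, MvPolynomial.homogeneousComponent d (G l j) ≠ 0}

/-- `Ḡ`: the lowest-degree row matrix of `G`; row `l` consists of the homogeneous components of
degree `rowDeg G l` of the entries of row `l` of `G`. -/
def lowMat {q p : ℕ} (G : Matrix (Fin q) (Fin p) (MvPolynomial (Fin p) ℝ)) :
    Matrix (Fin q) (Fin p) (MvPolynomial (Fin p) ℝ) :=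
  Matrix.of fun l j => MvPolynomial.homogeneousComponent (rowDeg G l) (G l j)

/-- Echelon form: the row degrees are nondecreasing (rows are stacked in blocks of equal degree
with strictly increasing degrees) and the rows of `Ḡ` are linearly independent as vectors of
polynomial functions. -/
def IsEchelon {q p : ℕ} (G : Matrix (Fin q) (Fin p) (MvPolynomial (Fin p) ℝ)) : Prop :=
  Monotone (rowDeg G) ∧ LinearIndependent ℝ (fun l : Fin q => lowMat G l)

/-- The echelon scaling matrix `Δ_T = diag[T^{s̄_l/2}]`. -/
def scaleMat {q : ℕ} (s : Fin q → ℕ) (T : ℝ) : Matrix (Fin q) (Fin q) ℝ :=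
  Matrix.diagonal fun l => T ^ ((s l : ℝ) / 2)

/-- The scaled matrix `M_T(y,U) = Δ_T G(T^{-1/2} y) U G(T^{-1/2} y)ᵀ Δ_T`. -/
def MT {q p : ℕ} (G : Matrix (Fin q) (Fin p) (MvPolynomial (Fin p) ℝ))
    (U : Matrix (Fin p) (Fin p) ℝ) (T : ℝ) (y : Fin p → ℝ) : Matrix (Fin q) (Fin q) ℝ :=
  scaleMat (rowDeg G) T * evalMat G (fun i => T ^ (-(1 : ℝ) / 2) * y i) * U *
    (evalMat G (fun i => T ^ (-(1 : ℝ) / 2) * y i))ᵀ * scaleMat (rowDeg G) T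

/-- `Ḡ(y) U Ḡ(y)ᵀ`. -/
def Bbar {q p : ℕ} (G : Matrix (Fin q) (Fin p) (MvPolynomial (Fin p) ℝ))
    (U : Matrix (Fin p) (Fin p) ℝ) (y : Fin p → ℝ) : Matrix (Fin q) (Fin q) ℝ :=
  evalMat (lowMat G) y * U * (evalMat (lowMat G) y)ᵀ

/-- `lam` is the vector of eigenvalues of `M` arranged in decreasing order:
it is antitone and enumerates the roots of the characteristic polynomial with multiplicity. -/
def IsOrderedEigs {q : ℕ} (M : Matrix (Fin q) (Fin q) ℝ) (lam : Fin q → ℝ) : Prop :=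
  Antitone lam ∧ M.charpoly = ∏ i, (Polynomial.X - Polynomial.C (lam i))

/-- The `k`-th elementary symmetric polynomial of `λ_1, …, λ_q`. -/
def esymmVal {q : ℕ} (k : ℕ) (lam : Fin q → ℝ) : ℝ :=
  ∑ S ∈ Finset.powersetCard k (Finset.univ : Finset (Fin q)), ∏ i ∈ S, lam i

/-- `B(x,U) = G(x) U G(x)ᵀ` as a matrix of polynomials in `x`. -/
def BPoly {q p : ℕ} (G : Matrix (Fin q) (Fin p) (MvPolynomial (Fin p) ℝ))
    (U : Matrix (Fin p) (Fin p) ℝ) : Matrix (Fin q) (Fin q) (MvPolynomial (Fin p) ℝ) :=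
  (G * U.map MvPolynomial.C : Matrix (Fin q) (Fin p) (MvPolynomial (Fin p) ℝ)) * Gᵀ

/-- The coefficient `a_k(x,U)` of `λ^{q-k}` in the characteristic polynomial of `B(x,U)`,
as a polynomial in `x`. -/
def acoeff {q p : ℕ} (G : Matrix (Fin q) (Fin p) (MvPolynomial (Fin p) ℝ))
    (U : Matrix (Fin p) (Fin p) ℝ) (k : ℕ) : MvPolynomial (Fin p) ℝ :=
  (BPoly G U).charpoly.coeff (q - k)

/-- `m_k(U)`: the lowest degree of a nonzero homogeneous-in-`x` component of `a_k(x,U)`. -/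
def mkU {q p : ℕ} (G : Matrix (Fin q) (Fin p) (MvPolynomial (Fin p) ℝ))
    (U : Matrix (Fin p) (Fin p) ℝ) (k : ℕ) : ℕ :=
  lowDeg (acoeff G U k)

/-- `m_k = min_{Q ∈ F_p} m_k(Q)`. -/
def mkmin {q p : ℕ} (G : Matrix (Fin q) (Fin p) (MvPolynomial (Fin p) ℝ)) (k : ℕ) : ℕ :=
  sInf ((fun U => mkU G U k) '' {U : Matrix (Fin p) (Fin p) ℝ | U.IsSymm ∧ U.PosDef})

/-- The symmetric matrix built from the upper-triangular entries of `u`. -/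
def symOfUpper {p : ℕ} (u : Fin p → Fin p → ℝ) : Matrix (Fin p) (Fin p) ℝ :=
  Matrix.of fun i j => if i ≤ j then u i j else u j i

/-- Principal minor of `M` with rows and columns in `S` retained. -/
def pminor {q : ℕ} {R : Type*} [CommRing R] (M : Matrix (Fin q) (Fin q) R)
    (S : Finset (Fin q)) : R :=
  (M.submatrix (fun i : {a // a ∈ S} => (i : Fin q)) (fun i : {a // a ∈ S} => (i : Fin q))).det

/-- The Jacobian matrix `∂g/∂θᵀ` of a vector of polynomials. -/
def jacMat {q p : ℕ} (g : Fin q → MvPolynomial (Fin p) ℝ) :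
    Matrix (Fin q) (Fin p) (MvPolynomial (Fin p) ℝ) :=
  Matrix.of fun l j => MvPolynomial.pderiv j (g l)

/-- The polynomial `f(θ̄ + ·)`. -/
def shiftPoly {p : ℕ} (θbar : Fin p → ℝ) (f : MvPolynomial (Fin p) ℝ) : MvPolynomial (Fin p) ℝ :=
  MvPolynomial.bind₁ (fun i => MvPolynomial.X i + MvPolynomial.C (θbar i)) f

/-- Convergence in distribution of `E`-valued random elements to the law `μ`:
weak convergence tested against bounded continuous functions. -/
def TendstoInDist {Ω E : Type*} [MeasurableSpace Ω] [TopologicalSpace E] [MeasurableSpace E]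
    (P : Measure Ω) (X : ℕ → Ω → E) (μ : Measure E) : Prop :=
  ∀ f : BoundedContinuousFunction E ℝ,
    Tendsto (fun T => ∫ ω, f (X T ω) ∂P) atTop (𝓝 (∫ x, f x ∂μ))

/-- `μ` is the centered Gaussian law `N(0,V)` on `ℝ^p`: a probability measure all of whose
one-dimensional linear marginals are centered Gaussian with the prescribed variance. -/
def IsGaussianLaw {p : ℕ} (μ : Measure (Fin p → ℝ)) (V : Matrix (Fin p) (Fin p) ℝ) : Prop :=
  IsProbabilityMeasure μ ∧
    ∀ a : Fin p → ℝ,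
      μ.map (fun x => ∑ i, a i * x i) =
        ProbabilityTheory.gaussianReal 0 (Real.toNNReal (∑ i, ∑ j, a i * V i j * a j))

/-- Convergence in probability to a constant. -/
def TendstoInProbConst {Ω E : Type*} [MeasurableSpace Ω] [PseudoMetricSpace E]
    (P : Measure Ω) (X : ℕ → Ω → E) (c : E) : Prop :=
  ∀ ε : ℝ, 0 < ε → Tendsto (fun T => P {ω | ε ≤ dist (X T ω) c}) atTop (𝓝 0)

/-- Divergence to `+∞` in probability. -/
def TendstoInProbAtTop {Ω : Type*} [MeasurableSpace Ω]
    (P : Measure Ω) (X : ℕ → Ω → ℝ) : Prop :=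
  ∀ C : ℝ, Tendsto (fun T => P {ω | X T ω ≤ C}) atTop (𝓝 0)

/-- Boundedness in probability (`O_p(1)`). -/
def BoundedInProb {Ω : Type*} [MeasurableSpace Ω]
    (P : Measure Ω) (X : ℕ → Ω → ℝ) : Prop :=
  ∀ ε : ℝ, 0 < ε → ∃ C : ℝ, ∀ᶠ T in atTop, P {ω | C ≤ |X T ω|} ≤ ENNReal.ofReal ε

end


section AuxProofs
open Polynomial Matrix Finset

private lemma my_charpoly_conj {n : Type*} [Fintype n] [DecidableEq n] (V W D : Matrix n n ℝ)
    (hVW : V * W = 1) : (V * D * W).charpoly = D.charpoly := by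
  have hone : V.map (C : ℝ →+* ℝ[X]) * W.map C = 1 := by
    rw [← Matrix.map_mul, hVW]
    simp
  have h1 : charmatrix (V * D * W) = V.map (C : ℝ →+* ℝ[X]) * charmatrix D * W.map C := by
    unfold charmatrix
    rw [Matrix.mul_sub, Matrix.sub_mul]
    congr 1
    · rw [scalar_apply, ← smul_one_eq_diagonal, mul_smul_comm, smul_mul_assoc, mul_one, hone]
    · simp only [RingHom.mapMatrix_apply]
      rw [← Matrix.map_mul, ← Matrix.map_mul]
  have h2 := congrArg Matrix.det h1
  rw [Matrix.det_mul, Matrix.det_mul] at h2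
  have h3 : (V.map (C : ℝ →+* ℝ[X])).det * (W.map C).det = 1 := by
    rw [← Matrix.det_mul, hone, Matrix.det_one]
  unfold Matrix.charpoly
  rw [h2]
  ring_nf
  rw [mul_comm, ← mul_assoc, mul_comm ((Matrix.map W C).det), h3, one_mul]

private lemma my_charpoly_eq_prod {n : Type*} [Fintype n] [DecidableEq n] [LinearOrder n]
    (A : Matrix n n ℝ) (hA : A.IsHermitian) :
    A.charpoly = ∏ i, (X - C (hA.eigenvalues i)) := by
  conv_lhs => rw [hA.spectral_theorem]
  simp only [Unitary.conjStarAlgAut_apply, Unitary.coe_star]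
  rw [my_charpoly_conj _ _ _ ((Matrix.mem_unitaryGroup_iff).mp hA.eigenvectorUnitary.2)]
  rw [Matrix.charpoly_of_upperTriangular _ (Matrix.blockTriangular_diagonal _)]
  simp

private lemma my_exists_spectral {n : ℕ} (A : Matrix (Fin n) (Fin n) ℝ) (hA : A.IsHermitian) :
    ∃ (v : Fin n → (Fin n → ℝ)) (μ : Fin n → ℝ),
      (∀ i j, v i ⬝ᵥ v j = if i = j then 1 else 0) ∧
      (∀ i, A *ᵥ v i = μ i • v i) ∧
      A.charpoly = ∏ i, (X - C (μ i)) := by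
  refine ⟨fun i => (WithLp.equiv 2 _) (hA.eigenvectorBasis i), hA.eigenvalues, ?_,
    hA.mulVec_eigenvectorBasis, my_charpoly_eq_prod A hA⟩
  intro i j
  have h := (orthonormal_iff_ite (𝕜 := ℝ)).mp hA.eigenvectorBasis.orthonormal i j
  rw [EuclideanSpace.inner_eq_star_dotProduct, dotProduct_comm] at h
  simpa using h

private lemma my_multiset_eq {n : ℕ} {lam mu : Fin n → ℝ}
    (h : (∏ i, (X - C (lam i))) = ∏ i, (X - C (mu i))) :
    Multiset.map lam Finset.univ.val = Multiset.map mu Finset.univ.val := by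
  have key : ∀ f : Fin n → ℝ,
      (∏ i, (X - C (f i))) = ((Multiset.map f Finset.univ.val).map (fun a => X - C a)).prod := by
    intro f; rw [Multiset.map_map]; rfl
  have h2 : ((Multiset.map lam Finset.univ.val).map (fun a => X - C a)).prod
      = ((Multiset.map mu Finset.univ.val).map (fun a => X - C a)).prod := by
    rw [← key lam, ← key mu]; exact h
  have h3 := congrArg Polynomial.roots h2
  rwa [roots_multiset_prod_X_sub_C, roots_multiset_prod_X_sub_C] at h3

private lemma my_count_eq {n : ℕ} {lam mu : Fin n → ℝ}
    (h : Multiset.map lam Finset.univ.val = Multiset.map mu Finset.univ.val)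
    (P : ℝ → Prop) [DecidablePred P] :
    (Finset.univ.filter fun i => P (lam i)).card = (Finset.univ.filter fun i => P (mu i)).card := by
  have h2 := congrArg (Multiset.countP P) h
  rw [Multiset.countP_map, Multiset.countP_map] at h2
  simpa [Finset.card, Finset.filter] using h2

private lemma my_dot_self_pos {n : ℕ} {x : Fin n → ℝ} (hx : x ≠ 0) : 0 < x ⬝ᵥ x := by
  rcases Function.ne_iff.mp hx with ⟨i, hi⟩
  have : x ⬝ᵥ x = ∑ j, x j ^ 2 := by simp [dotProduct, sq]
  rw [this]
  exact Finset.sum_pos' (fun j _ => sq_nonneg _)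
    ⟨i, Finset.mem_univ i, sq_pos_of_ne_zero (by simpa using hi)⟩

private lemma my_dot_self_nonneg {n : ℕ} (x : Fin n → ℝ) : 0 ≤ x ⬝ᵥ x := by
  have : x ⬝ᵥ x = ∑ j, x j ^ 2 := by simp [dotProduct, sq]
  rw [this]
  exact Finset.sum_nonneg fun j _ => sq_nonneg _

private lemma my_dot_combo {ι : Type*} [Fintype ι] {n : ℕ} {v : ι → Fin n → ℝ}
    [DecidableEq ι]
    (hON : ∀ i j, v i ⬝ᵥ v j = if i = j then 1 else 0) (f g : ι → ℝ) :
    (∑ i, f i • v i) ⬝ᵥ (∑ j, g j • v j) = ∑ i, f i * g i := by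
  have key : ∀ i j : ι, ∑ k, (f i * v i k) * (g j * v j k) = f i * g j * (v i ⬝ᵥ v j) := by
    intro i j
    simp only [dotProduct, Finset.mul_sum]
    exact Finset.sum_congr rfl fun k _ => by ring
  calc (∑ i, f i • v i) ⬝ᵥ (∑ j, g j • v j)
      = ∑ k, (∑ i, f i * v i k) * (∑ j, g j * v j k) := by
        simp [dotProduct, Finset.sum_apply, Pi.smul_apply, smul_eq_mul]
    _ = ∑ k, ∑ i, ∑ j, (f i * v i k) * (g j * v j k) := by
        exact Finset.sum_congr rfl fun k _ => by rw [Finset.sum_mul_sum]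
    _ = ∑ i, ∑ j, ∑ k, (f i * v i k) * (g j * v j k) := by
        rw [Finset.sum_comm]
        exact Finset.sum_congr rfl fun i _ => Finset.sum_comm
    _ = ∑ i, ∑ j, f i * g j * (v i ⬝ᵥ v j) := by
        exact Finset.sum_congr rfl fun i _ => Finset.sum_congr rfl fun j _ => key i j
    _ = ∑ i, f i * g i := by
        simp [hON, mul_ite]

private lemma my_linindep {ι : Type*} [Fintype ι] [DecidableEq ι] {n : ℕ} {v : ι → Fin n → ℝ}
    (hON : ∀ i j, v i ⬝ᵥ v j = if i = j then 1 else 0) : LinearIndependent ℝ v := by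
  rw [Fintype.linearIndependent_iff]
  intro g hg i
  have h := congrArg (fun x => x ⬝ᵥ v i) hg
  simp only [zero_dotProduct] at h
  have h2 : (∑ j, g j • v j) ⬝ᵥ (∑ j, (if j = i then (1:ℝ) else 0) • v j) = g i := by
    rw [my_dot_combo hON]
    simp
  rw [show (∑ j, (if j = i then (1:ℝ) else 0) • v j) = v i by simp] at h2
  rw [h] at h2
  exact h2.symm

private lemma my_expand {ι : Type*} [Fintype ι] [DecidableEq ι] {n : ℕ}
    {A : Matrix (Fin n) (Fin n) ℝ} {v : ι → Fin n → ℝ} {μ : ι → ℝ}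
    (hON : ∀ i j, v i ⬝ᵥ v j = if i = j then 1 else 0)
    (heig : ∀ i, A *ᵥ v i = μ i • v i) (f : ι → ℝ) :
    ((∑ i, f i • v i) ⬝ᵥ (A *ᵥ (∑ i, f i • v i)) = ∑ i, μ i * f i ^ 2) ∧
    ((∑ i, f i • v i) ⬝ᵥ (∑ i, f i • v i) = ∑ i, f i ^ 2) := by
  constructor
  · have hAv : A *ᵥ (∑ i, f i • v i) = ∑ i, (f i * μ i) • v i := by
      have := map_sum (Matrix.mulVecLin A) (fun i => f i • v i) Finset.univ
      simp only [Matrix.mulVecLin_apply] at this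
      rw [this]
      exact Finset.sum_congr rfl fun i _ => by
        rw [Matrix.mulVec_smul, heig i, smul_smul]
    rw [hAv, my_dot_combo hON f (fun i => f i * μ i)]
    exact Finset.sum_congr rfl fun i _ => by ring
  · rw [my_dot_combo hON f f]
    exact Finset.sum_congr rfl fun i _ => (sq (f i)).symm

private lemma my_exists_test_vector {n : ℕ} {A B : Matrix (Fin n) (Fin n) ℝ}
    (hA : A.IsHermitian) (hB : B.IsHermitian) {lam mu : Fin n → ℝ}
    (hOA : IsOrderedEigs A lam) (hOB : IsOrderedEigs B mu) (l : Fin n) :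
    ∃ x : Fin n → ℝ, 0 < x ⬝ᵥ x ∧ lam l * (x ⬝ᵥ x) ≤ x ⬝ᵥ A *ᵥ x ∧
      x ⬝ᵥ B *ᵥ x ≤ mu l * (x ⬝ᵥ x) := by
  classical
  obtain ⟨vA, μA, hONA, heigA, hcpA⟩ := my_exists_spectral A hA
  obtain ⟨vB, μB, hONB, heigB, hcpB⟩ := my_exists_spectral B hB
  have msA : Multiset.map lam Finset.univ.val = Multiset.map μA Finset.univ.val :=
    my_multiset_eq (hOA.2.symm.trans hcpA)
  have msB : Multiset.map mu Finset.univ.val = Multiset.map μB Finset.univ.val :=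
    my_multiset_eq (hOB.2.symm.trans hcpB)
  set S₁ : Finset (Fin n) := Finset.univ.filter (fun i => lam l ≤ μA i) with hS₁
  set S₂ : Finset (Fin n) := Finset.univ.filter (fun i => μB i ≤ mu l) with hS₂
  have cS₁ : (l : ℕ) + 1 ≤ S₁.card := by
    rw [hS₁, ← my_count_eq msA (fun t => lam l ≤ t)]
    calc (l : ℕ) + 1 = (Finset.Iic l).card := (Fin.card_Iic l).symm
      _ ≤ _ := Finset.card_le_card (fun i hi => by
          simp only [Finset.mem_filter, Finset.mem_univ, true_and]
          exact hOA.1 (Finset.mem_Iic.mp hi))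
  have cS₂ : n - (l : ℕ) ≤ S₂.card := by
    rw [hS₂, ← my_count_eq msB (fun t => t ≤ mu l)]
    calc n - (l : ℕ) = (Finset.Ici l).card := (Fin.card_Ici l).symm
      _ ≤ _ := Finset.card_le_card (fun i hi => by
          simp only [Finset.mem_filter, Finset.mem_univ, true_and]
          exact hOB.1 (Finset.mem_Ici.mp hi))
  set V₁ := Submodule.span ℝ (Set.range fun i : {a // a ∈ S₁} => vA i) with hV₁
  set V₂ := Submodule.span ℝ (Set.range fun i : {a // a ∈ S₂} => vB i) with hV₂
  have fr₁ : Module.finrank ℝ V₁ = S₁.card := by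
    rw [hV₁]
    exact (finrank_span_eq_card ((my_linindep hONA).comp _ Subtype.val_injective)).trans
      (Fintype.card_coe S₁)
  have fr₂ : Module.finrank ℝ V₂ = S₂.card := by
    rw [hV₂]
    exact (finrank_span_eq_card ((my_linindep hONB).comp _ Subtype.val_injective)).trans
      (Fintype.card_coe S₂)
  have hsup : Module.finrank ℝ ↥(V₁ ⊔ V₂) ≤ n := by
    have := Submodule.finrank_le (V₁ ⊔ V₂)
    rwa [Module.finrank_pi ℝ, Fintype.card_fin] at this
  have hinf : 0 < Module.finrank ℝ ↥(V₁ ⊓ V₂) := by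
    have h1 := Submodule.finrank_sup_add_finrank_inf_eq V₁ V₂
    rw [fr₁, fr₂] at h1
    omega
  obtain ⟨x, hxmem, hx0⟩ := (Submodule.ne_bot_iff (V₁ ⊓ V₂)).mp (by
    intro h; rw [h] at hinf; simp at hinf)
  have hx1 : x ∈ V₁ := (Submodule.mem_inf.mp hxmem).1
  have hx2 : x ∈ V₂ := (Submodule.mem_inf.mp hxmem).2
  obtain ⟨f, hf⟩ := (Submodule.mem_span_range_iff_exists_fun ℝ).mp hx1
  obtain ⟨g, hg⟩ := (Submodule.mem_span_range_iff_exists_fun ℝ).mp hx2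
  have hONA' : ∀ i j : {a // a ∈ S₁}, vA i ⬝ᵥ vA j = if i = j then (1:ℝ) else 0 := by
    intro i j; rw [hONA]; simp [Subtype.coe_inj]
  have hONB' : ∀ i j : {a // a ∈ S₂}, vB i ⬝ᵥ vB j = if i = j then (1:ℝ) else 0 := by
    intro i j; rw [hONB]; simp [Subtype.coe_inj]
  have expA := my_expand hONA' (fun i : {a // a ∈ S₁} => heigA i) f
  have expB := my_expand hONB' (fun i : {a // a ∈ S₂} => heigB i) g
  rw [hf] at expA
  rw [hg] at expB
  refine ⟨x, my_dot_self_pos hx0, ?_, ?_⟩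
  · rw [expA.1, expA.2, Finset.mul_sum]
    refine Finset.sum_le_sum fun i _ => ?_
    have hi : lam l ≤ μA i := by
      have h2 := i.2
      simp only [hS₁, Finset.mem_filter] at h2
      exact h2.2
    exact mul_le_mul_of_nonneg_right hi (sq_nonneg _)
  · rw [expB.1, expB.2, Finset.mul_sum]
    refine Finset.sum_le_sum fun i _ => ?_
    have hi : μB i ≤ mu l := by
      have h2 := i.2
      simp only [hS₂, Finset.mem_filter] at h2
      exact h2.2
    exact mul_le_mul_of_nonneg_right hi (sq_nonneg _)

private lemma my_weyl_le {n : ℕ} {A B : Matrix (Fin n) (Fin n) ℝ}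
    (hA : A.IsHermitian) (hB : B.IsHermitian) {lam mu : Fin n → ℝ}
    (hOA : IsOrderedEigs A lam) (hOB : IsOrderedEigs B mu) {c : ℝ} (hc : 0 ≤ c)
    (h : ∀ x : Fin n → ℝ, x ⬝ᵥ A *ᵥ x ≤ c * (x ⬝ᵥ B *ᵥ x)) (l : Fin n) :
    lam l ≤ c * mu l := by
  obtain ⟨x, hxx, h1, h2⟩ := my_exists_test_vector hA hB hOA hOB l
  nlinarith [h x, mul_le_mul_of_nonneg_left h2 hc]

private lemma my_weyl_ge {n : ℕ} {A B : Matrix (Fin n) (Fin n) ℝ}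
    (hA : A.IsHermitian) (hB : B.IsHermitian) {lam mu : Fin n → ℝ}
    (hOA : IsOrderedEigs A lam) (hOB : IsOrderedEigs B mu) {c : ℝ} (hc : 0 ≤ c)
    (h : ∀ x : Fin n → ℝ, c * (x ⬝ᵥ B *ᵥ x) ≤ x ⬝ᵥ A *ᵥ x) (l : Fin n) :
    c * mu l ≤ lam l := by
  obtain ⟨x, hxx, h1, h2⟩ := my_exists_test_vector hB hA hOB hOA l
  nlinarith [h x, mul_le_mul_of_nonneg_left h1 hc]

private lemma my_posdef_bound {p : ℕ} (U : Matrix (Fin p) (Fin p) ℝ)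
    (hH : U.IsHermitian) (hU : U.PosDef) :
    ∃ u0 : ℝ, 0 < u0 ∧ ∀ z : Fin p → ℝ, u0 * (z ⬝ᵥ z) ≤ z ⬝ᵥ U *ᵥ z := by
  classical
  obtain ⟨v, μ, hON, heig, _⟩ := my_exists_spectral U hH
  rcases Nat.eq_zero_or_pos p with hp | hp
  · subst hp
    exact ⟨1, one_pos, fun z => by simp [dotProduct]⟩
  have hne : (Finset.univ : Finset (Fin p)).Nonempty := ⟨⟨0, hp⟩, Finset.mem_univ _⟩
  have hpos : ∀ i, 0 < μ i := by
    intro i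
    have hv0 : v i ≠ 0 := by
      intro h
      have h2 := hON i i
      rw [h] at h2
      simp at h2
    have hq := hU.dotProduct_mulVec_pos hv0
    have h3 : v i ⬝ᵥ U *ᵥ v i = μ i := by
      rw [heig i, dotProduct_smul, hON i i]
      simp
    simpa [h3] using hq
  refine ⟨Finset.univ.inf' hne μ, ?_, ?_⟩
  · exact (Finset.lt_inf'_iff hne).mpr (fun i _ => hpos i)
  intro z
  have htop : Submodule.span ℝ (Set.range v) = ⊤ := by
    apply Submodule.eq_top_of_finrank_eq
    rw [finrank_span_eq_card (my_linindep hON), Fintype.card_fin,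
      Module.finrank_pi ℝ, Fintype.card_fin]
  obtain ⟨f, hf⟩ := (Submodule.mem_span_range_iff_exists_fun ℝ).mp (htop ▸ Submodule.mem_top : z ∈ _)
  have exp := my_expand hON heig f
  rw [hf] at exp
  rw [exp.1, exp.2, Finset.mul_sum]
  refine Finset.sum_le_sum fun i _ => ?_
  exact mul_le_mul_of_nonneg_right (Finset.inf'_le μ (Finset.mem_univ i)) (sq_nonneg _)

private lemma my_symm_hermitian {n : ℕ} {M : Matrix (Fin n) (Fin n) ℝ} (h : Mᵀ = M) :
    M.IsHermitian := by
  have : Mᴴ = Mᵀ := by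
    ext i j
    simp [Matrix.conjTranspose_apply]
  rw [Matrix.IsHermitian, this, h]

private lemma my_quad_perturb {p : ℕ} (D : Matrix (Fin p) (Fin p) ℝ) (z : Fin p → ℝ) :
    |z ⬝ᵥ D *ᵥ z| ≤ (∑ i, ∑ j, |D i j|) * (z ⬝ᵥ z) := by
  have hzz : ∀ k, z k ^ 2 ≤ z ⬝ᵥ z := by
    intro k
    have : z ⬝ᵥ z = ∑ j, z j ^ 2 := by simp [dotProduct, sq]
    rw [this]
    exact Finset.single_le_sum (fun j _ => sq_nonneg (z j)) (Finset.mem_univ k)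
  have key : ∀ i j, |z i * (D i j * z j)| ≤ |D i j| * (z ⬝ᵥ z) := by
    intro i j
    rw [abs_mul, abs_mul]
    have h1 := hzz i
    have h2 := hzz j
    nlinarith [sq_nonneg (|z i| - |z j|), sq_abs (z i), sq_abs (z j), abs_nonneg (z i),
      abs_nonneg (z j), abs_nonneg (D i j)]
  calc |z ⬝ᵥ D *ᵥ z| = |∑ i, ∑ j, z i * (D i j * z j)| := by
        simp [dotProduct, Matrix.mulVec, Finset.mul_sum]
    _ ≤ ∑ i, |∑ j, z i * (D i j * z j)| := Finset.abs_sum_le_sum_abs _ _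
    _ ≤ ∑ i, ∑ j, |z i * (D i j * z j)| :=
        Finset.sum_le_sum fun i _ => Finset.abs_sum_le_sum_abs _ _
    _ ≤ ∑ i, ∑ j, |D i j| * (z ⬝ᵥ z) :=
        Finset.sum_le_sum fun i _ => Finset.sum_le_sum fun j _ => key i j
    _ = (∑ i, ∑ j, |D i j|) * (z ⬝ᵥ z) := by
        rw [Finset.sum_mul]
        exact Finset.sum_congr rfl fun i _ => (Finset.sum_mul _ _ _).symm

private lemma my_quad_conj {q p : ℕ} (W : Matrix (Fin q) (Fin p) ℝ)
    (Q : Matrix (Fin p) (Fin p) ℝ) (x : Fin q → ℝ) :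
    x ⬝ᵥ (W * Q * Wᵀ) *ᵥ x = (Wᵀ *ᵥ x) ⬝ᵥ Q *ᵥ (Wᵀ *ᵥ x) := by
  rw [← Matrix.mulVec_mulVec, ← Matrix.mulVec_mulVec, Matrix.dotProduct_mulVec x W,
    Matrix.mulVec_transpose]

private lemma my_MT_form {q p : ℕ} (G : Matrix (Fin q) (Fin p) (MvPolynomial (Fin p) ℝ))
    (Q : Matrix (Fin p) (Fin p) ℝ) (t : ℝ) (y : Fin p → ℝ) :
    MT G Q t y = (scaleMat (rowDeg G) t * evalMat G (fun i => t ^ (-(1:ℝ)/2) * y i)) * Q *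
      (scaleMat (rowDeg G) t * evalMat G (fun i => t ^ (-(1:ℝ)/2) * y i))ᵀ := by
  unfold MT scaleMat
  rw [Matrix.transpose_mul, Matrix.diagonal_transpose, ← Matrix.mul_assoc]

end AuxProofs

/-- Proposition 3(a). In the setting of Proposition 2 (with exponents `β_l`
and limit functions `λ_l(·,U)` for the ordered eigenvalues of `M_T(y,U)`), if `U_T ∈ F_p` is a
sequence with `U_T → U` and `m_l(U) = m_l` for all `l = 1,…,q`, then
`T^{β_l} λ̄_l^{(T)}(y,U_T) → λ_l(y,U)` for almost every `y` and every `l`, and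
`λ_l(y,U) > 0` for almost every `y`. -/
theorem statement_6 {q p : ℕ} (hq : 1 ≤ q)
    (G : Matrix (Fin q) (Fin p) (MvPolynomial (Fin p) ℝ))
    (hrank : ∀ᵐ x ∂(volume : Measure (Fin p → ℝ)), (evalMat G x).rank = q)
    (hech : IsEchelon G)
    (r : ℕ) (hr : IsPolyRank (lowMat G) r)
    (U : Matrix (Fin p) (Fin p) ℝ) (hUsymm : U.IsSymm) (hUpos : U.PosDef)
    -- the data of Proposition 2: exponents `β`, ordered eigenvalues of `M_T(y,U)`, limits
    (β : Fin q → ℕ)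
    (hβ0 : ∀ l : Fin q, (l : ℕ) < r → β l = 0)
    (hβ1 : ∀ l : Fin q, r ≤ (l : ℕ) → 1 ≤ β l)
    (lamT : ℕ → (Fin p → ℝ) → Fin q → ℝ)
    (hlamT : ∀ (T : ℕ) (y : Fin p → ℝ), IsOrderedEigs (MT G U (T : ℝ) y) (lamT T y))
    (lamLim : Fin q → (Fin p → ℝ) → ℝ)
    (hcont : ∀ l, Continuous (lamLim l))
    (hne : ∀ l, ∀ᵐ y ∂(volume : Measure (Fin p → ℝ)), lamLim l y ≠ 0)
    (hconv : ∀ᵐ y ∂(volume : Measure (Fin p → ℝ)), ∀ l : Fin q,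
      Tendsto (fun T : ℕ => (T : ℝ) ^ (β l) * lamT T y l) atTop (𝓝 (lamLim l y)))
    -- the approximating sequence `U_T → U`
    (Useq : ℕ → Matrix (Fin p) (Fin p) ℝ)
    (hUseq : ∀ T, (Useq T).IsSymm ∧ (Useq T).PosDef)
    (hUconv : ∀ a b : Fin p, Tendsto (fun T : ℕ => Useq T a b) atTop (𝓝 (U a b)))
    -- the hypothesis `m_l(U) = m_l` for all `l`
    (hm : ∀ l ∈ Finset.Icc 1 q, mkU G U l = mkmin G l)
    -- ordered eigenvalues of `M_T(y,U_T)`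
    (lamTs : ℕ → (Fin p → ℝ) → Fin q → ℝ)
    (hlamTs : ∀ (T : ℕ) (y : Fin p → ℝ), IsOrderedEigs (MT G (Useq T) (T : ℝ) y) (lamTs T y)) :
    (∀ᵐ y ∂(volume : Measure (Fin p → ℝ)), ∀ l : Fin q,
      Tendsto (fun T : ℕ => (T : ℝ) ^ (β l) * lamTs T y l) atTop (𝓝 (lamLim l y))) ∧
    (∀ l : Fin q, ∀ᵐ y ∂(volume : Measure (Fin p → ℝ)), 0 < lamLim l y) := by
    classical
  obtain ⟨u0, hu0, hub⟩ := my_posdef_bound U (my_symm_hermitian hUsymm) hUpos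
  set K : ℕ → ℝ := fun T => ∑ i, ∑ j, |Useq T i j - U i j| with hKdef
  have hKnn : ∀ T, 0 ≤ K T := fun T =>
    Finset.sum_nonneg fun i _ => Finset.sum_nonneg fun j _ => abs_nonneg _
  have hK : Tendsto K atTop (𝓝 0) := by
    have h0 : (0:ℝ) = ∑ _i : Fin p, ∑ _j : Fin p, (0:ℝ) := by simp
    rw [hKdef, h0]
    refine tendsto_finset_sum _ fun i _ => tendsto_finset_sum _ fun j _ => ?_
    have h1 := ((hUconv i j).sub (tendsto_const_nhds (x := U i j))).abs
    simpa using h1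
  have hcC : Tendsto (fun T => 1 - K T / u0) atTop (𝓝 1) := by
    have h1 := (tendsto_const_nhds (x := (1:ℝ)) (f := atTop)).sub (hK.div_const u0)
    simpa using h1
  have hCC : Tendsto (fun T => 1 + K T / u0) atTop (𝓝 1) := by
    have h1 := (tendsto_const_nhds (x := (1:ℝ)) (f := atTop)).add (hK.div_const u0)
    simpa using h1
  have hsymm : ∀ (Q : Matrix (Fin p) (Fin p) ℝ), Qᵀ = Q → ∀ (t : ℝ) (y' : Fin p → ℝ),
      (MT G Q t y')ᵀ = MT G Q t y' := by
    intro Q hQ t y'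
    rw [my_MT_form]
    simp [Matrix.transpose_mul, Matrix.transpose_transpose, hQ, Matrix.mul_assoc]
  have hquad : ∀ (Q : Matrix (Fin p) (Fin p) ℝ) (t : ℝ) (y' : Fin p → ℝ) (x : Fin q → ℝ),
      x ⬝ᵥ (MT G Q t y') *ᵥ x =
        ((scaleMat (rowDeg G) t * evalMat G (fun i => t ^ (-(1:ℝ)/2) * y' i))ᵀ *ᵥ x) ⬝ᵥ
          Q *ᵥ ((scaleMat (rowDeg G) t * evalMat G (fun i => t ^ (-(1:ℝ)/2) * y' i))ᵀ *ᵥ x) := by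
    intro Q t y' x
    rw [my_MT_form]
    exact my_quad_conj _ _ _
  have hcomp : ∀ (T : ℕ) (y' : Fin p → ℝ) (x : Fin q → ℝ),
      (1 - K T / u0) * (x ⬝ᵥ (MT G U (T:ℝ) y') *ᵥ x) ≤ x ⬝ᵥ (MT G (Useq T) (T:ℝ) y') *ᵥ x ∧
      x ⬝ᵥ (MT G (Useq T) (T:ℝ) y') *ᵥ x ≤ (1 + K T / u0) * (x ⬝ᵥ (MT G U (T:ℝ) y') *ᵥ x) := by
    intro T y' x
    set z := (scaleMat (rowDeg G) (T:ℝ) *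
      evalMat G (fun i => (T:ℝ) ^ (-(1:ℝ)/2) * y' i))ᵀ *ᵥ x with hz
    have e1 : x ⬝ᵥ (MT G U (T:ℝ) y') *ᵥ x = z ⬝ᵥ U *ᵥ z := hquad U _ y' x
    have e2 : x ⬝ᵥ (MT G (Useq T) (T:ℝ) y') *ᵥ x = z ⬝ᵥ (Useq T) *ᵥ z := hquad (Useq T) _ y' x
    have hd : z ⬝ᵥ (Useq T) *ᵥ z - z ⬝ᵥ U *ᵥ z = z ⬝ᵥ (Useq T - U) *ᵥ z := by
      rw [Matrix.sub_mulVec, dotProduct_sub]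
    have hb := my_quad_perturb (Useq T - U) z
    have hKT : (∑ i, ∑ j, |(Useq T - U) i j|) = K T := by
      simp [hKdef, Matrix.sub_apply]
    rw [hKT] at hb
    obtain ⟨hb1, hb2⟩ := abs_le.mp hb
    have hzU := hub z
    have hzz := my_dot_self_nonneg z
    have hfact : K T * (z ⬝ᵥ z) ≤ (K T / u0) * (z ⬝ᵥ U *ᵥ z) := by
      have h1 := mul_le_mul_of_nonneg_left hzU (div_nonneg (hKnn T) hu0.le)
      calc K T * (z ⬝ᵥ z) = (K T / u0) * (u0 * (z ⬝ᵥ z)) := by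
            field_simp
          _ ≤ (K T / u0) * (z ⬝ᵥ U *ᵥ z) := h1
    constructor
    · rw [e1, e2]; nlinarith [hfact, hb1, hd]
    · rw [e1, e2]; nlinarith [hfact, hb2, hd]
  refine ⟨?_, ?_⟩
  · filter_upwards [hconv] with y hy
    intro l
    have hlow : Tendsto (fun T : ℕ => (1 - K T / u0) * ((T:ℝ) ^ (β l) * lamT T y l)) atTop
        (𝓝 (lamLim l y)) := by
      have h1 := hcC.mul (hy l); simpa using h1
    have hhigh : Tendsto (fun T : ℕ => (1 + K T / u0) * ((T:ℝ) ^ (β l) * lamT T y l)) atTop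
        (𝓝 (lamLim l y)) := by
      have h1 := hCC.mul (hy l); simpa using h1
    have hev : ∀ᶠ T : ℕ in atTop, 0 ≤ 1 - K T / u0 :=
      hcC.eventually (eventually_ge_nhds (show (0:ℝ) < 1 by norm_num))
    apply tendsto_of_tendsto_of_tendsto_of_le_of_le' hlow hhigh
    · filter_upwards [hev] with T hcT
      have h1 : (1 - K T / u0) * lamT T y l ≤ lamTs T y l :=
        my_weyl_ge (my_symm_hermitian (hsymm (Useq T) (hUseq T).1 (T:ℝ) y))
          (my_symm_hermitian (hsymm U hUsymm (T:ℝ) y)) (hlamTs T y) (hlamT T y) hcT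
          (fun x => (hcomp T y x).1) l
      calc (1 - K T / u0) * ((T:ℝ) ^ (β l) * lamT T y l)
          = (T:ℝ) ^ (β l) * ((1 - K T / u0) * lamT T y l) := by ring
        _ ≤ (T:ℝ) ^ (β l) * lamTs T y l :=
            mul_le_mul_of_nonneg_left h1 (pow_nonneg (Nat.cast_nonneg T) _)
    · filter_upwards with T
      have hCnn : 0 ≤ 1 + K T / u0 :=
        add_nonneg zero_le_one (div_nonneg (hKnn T) hu0.le)
      have h2 : lamTs T y l ≤ (1 + K T / u0) * lamT T y l :=
        my_weyl_le (my_symm_hermitian (hsymm (Useq T) (hUseq T).1 (T:ℝ) y))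
          (my_symm_hermitian (hsymm U hUsymm (T:ℝ) y)) (hlamTs T y) (hlamT T y) hCnn
          (fun x => (hcomp T y x).2) l
      calc (T:ℝ) ^ (β l) * lamTs T y l
          ≤ (T:ℝ) ^ (β l) * ((1 + K T / u0) * lamT T y l) :=
            mul_le_mul_of_nonneg_left h2 (pow_nonneg (Nat.cast_nonneg T) _)
        _ = (1 + K T / u0) * ((T:ℝ) ^ (β l) * lamT T y l) := by ring
  · intro l
    filter_upwards [hconv, hne l] with y hy hnl
    have h0 : IsOrderedEigs (0 : Matrix (Fin q) (Fin q) ℝ) (fun _ => (0:ℝ)) := by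
      refine ⟨antitone_const, ?_⟩
      rw [Matrix.charpoly_of_upperTriangular _ Matrix.blockTriangular_zero]
      simp
    have hnn : ∀ T : ℕ, 0 ≤ lamT T y l := by
      intro T
      have hpsd : ∀ x : Fin q → ℝ, (1:ℝ) * (x ⬝ᵥ (0 : Matrix (Fin q) (Fin q) ℝ) *ᵥ x) ≤
          x ⬝ᵥ (MT G U (T:ℝ) y) *ᵥ x := by
        intro x
        rw [hquad U (T:ℝ) y x]
        simp only [Matrix.zero_mulVec, dotProduct_zero, mul_zero]
        exact le_trans (mul_nonneg hu0.le (my_dot_self_nonneg _)) (hub _)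
      have h1 := my_weyl_ge (my_symm_hermitian (hsymm U hUsymm (T:ℝ) y))
        (my_symm_hermitian Matrix.transpose_zero) (hlamT T y) h0 zero_le_one hpsd l
      simpa using h1
    have hge : 0 ≤ lamLim l y :=
      ge_of_tendsto' (hy l) (fun T => mul_nonneg (pow_nonneg (Nat.cast_nonneg T) _) (hnn T))
    exact lt_of_le_of_ne hge (Ne.symm hnl)
end

section
/- Let θ = (x, y, w, z) ∈ ℝ^4, θ̄ = (0,0,1,1), g(θ) = (xy, xw, yz)ᵀ, and G(θ) = ∂g/∂θᵀ. Then the FRALD-T property fails for g at θ̄: for every invertible real 3×3 matrix S, the matrix obtained from S·G(θ̄ + u) (u ∈ ℝ^4) by replacing each row with the vector of homogeneous components of its lowest degree (the minimal degree of a nonzero monomial occurring in the entries of that row) has rank at most 2 as a polynomial matrix. In particular, for the permutation P reordering the rows as (2,3,1), the lowest-degree row matrix of P·G(θ̄ + u) is [[1,0,0,0],[0,1,0,0],[y,x,0,0]], whose rank as a polynomial matrix is 2 < 3. -/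
open MeasureTheory Filter Topology Matrix

noncomputable section
open MvPolynomial

lemma hcX' {p : ℕ} (m : ℕ) (i : Fin p) :
    homogeneousComponent m (X i : MvPolynomial (Fin p) ℝ) =
    if m = 1 then X i else 0 :=
  homogeneousComponent_of_mem ((mem_homogeneousSubmodule _ _).mpr (isHomogeneous_X _ _))

lemma hcCX' {p : ℕ} (m : ℕ) (r : ℝ) (i : Fin p) :
    homogeneousComponent m (C r * X i : MvPolynomial (Fin p) ℝ) =
    if m = 1 then C r * X i else 0 := by
  rw [homogeneousComponent_C_mul, hcX']
  split <;> simp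

lemma notRank3' {R : Type*} [CommRing R] {M : Matrix (Fin 3) (Fin 4) R}
    (h2 : ∀ l, M l 2 = 0) (h3 : ∀ l, M l 3 = 0) : ¬ rankGe M 3 := by
  rintro ⟨r, c, hr, hc, hdet⟩
  have hne : ∀ i j : Fin 3, i ≠ j → (c i).val ≠ (c j).val := by
    intro i j hij h
    exact hij (hc (Fin.val_injective h))
  have : ∃ i, c i = 2 ∨ c i = 3 := by
    by_contra h
    push_neg at h
    have hv : ∀ i, (c i).val ≠ 2 ∧ (c i).val ≠ 3 := by
      intro i
      have := h i
      constructor <;> intro hh <;> [exact this.1 (Fin.ext hh); exact this.2 (Fin.ext hh)]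
    have h01 := hne 0 1 (by decide)
    have h02 := hne 0 2 (by decide)
    have h12 := hne 1 2 (by decide)
    have b0 := (c 0).isLt; have b1 := (c 1).isLt; have b2 := (c 2).isLt
    have := hv 0; have := hv 1; have := hv 2
    omega
  obtain ⟨i, hi⟩ := this
  apply hdet
  apply Matrix.det_eq_zero_of_column_eq_zero i
  intro k
  simp only [Matrix.submatrix_apply]
  rcases hi with hi | hi <;> rw [hi]
  · exact h2 _
  · exact h3 _

def Gsx : Matrix (Fin 3) (Fin 4) (MvPolynomial (Fin 4) ℝ) :=
  !![X 1, X 0, 0, 0;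
     X 2 + 1, 0, X 0, 0;
     0, X 3 + 1, 0, X 1]

lemma key' (S : Matrix (Fin 3) (Fin 3) ℝ) (l : Fin 3) :
    lowMat ((S.map C : Matrix (Fin 3) (Fin 3) (MvPolynomial (Fin 4) ℝ)) * Gsx) l 2 = 0 ∧ lowMat ((S.map C : Matrix (Fin 3) (Fin 3) (MvPolynomial (Fin 4) ℝ)) * Gsx) l 3 = 0 := by
  have e0 : ((S.map C : Matrix (Fin 3) (Fin 3) (MvPolynomial (Fin 4) ℝ)) * Gsx) l 0 = C (S l 0) * X 1 + C (S l 1) * (X 2 + 1) := by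
    rw [Matrix.mul_apply, Fin.sum_univ_three]
    simp [Gsx]
  have e1 : ((S.map C : Matrix (Fin 3) (Fin 3) (MvPolynomial (Fin 4) ℝ)) * Gsx) l 1 = C (S l 0) * X 0 + C (S l 2) * (X 3 + 1) := by
    rw [Matrix.mul_apply, Fin.sum_univ_three]
    simp [Gsx]
  have e2 : ((S.map C : Matrix (Fin 3) (Fin 3) (MvPolynomial (Fin 4) ℝ)) * Gsx) l 2 = C (S l 1) * X 0 := by
    rw [Matrix.mul_apply, Fin.sum_univ_three]
    simp [Gsx]
  have e3 : ((S.map C : Matrix (Fin 3) (Fin 3) (MvPolynomial (Fin 4) ℝ)) * Gsx) l 3 = C (S l 2) * X 1 := by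
    rw [Matrix.mul_apply, Fin.sum_univ_three]
    simp [Gsx]
  by_cases h1 : rowDeg ((S.map C : Matrix (Fin 3) (Fin 3) (MvPolynomial (Fin 4) ℝ)) * Gsx) l = 1
  · have hb : S l 1 = 0 ∧ S l 2 = 0 := by
      by_contra h
      have h0 : rowDeg ((S.map C : Matrix (Fin 3) (Fin 3) (MvPolynomial (Fin 4) ℝ)) * Gsx) l = 0 := by
        apply Nat.sInf_eq_zero.mpr
        left
        rcases not_and_or.mp h with hb | hc2
        · refine ⟨0, ?_⟩
          rw [e0, homogeneousComponent_zero]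
          simp [coeff_add, coeff_C_mul, coeff_zero_X, coeff_zero_C, mul_add]
          exact hb
        · refine ⟨1, ?_⟩
          rw [e1, homogeneousComponent_zero]
          simp [coeff_add, coeff_C_mul, coeff_zero_X, coeff_zero_C, mul_add]
          exact hc2
      omega
    constructor
    · show homogeneousComponent _ _ = 0
      rw [e2, hb.1]; simp
    · show homogeneousComponent _ _ = 0
      rw [e3, hb.2]; simp
  · constructor
    · show homogeneousComponent _ _ = 0
      rw [e2, hcCX', if_neg h1]
    · show homogeneousComponent _ _ = 0
      rw [e3, hcCX', if_neg h1]

def Ax : Matrix (Fin 3) (Fin 4) (MvPolynomial (Fin 4) ℝ) :=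
  !![X 2 + 1, 0, X 0, 0;
     0, X 3 + 1, 0, X 1;
     X 1, X 0, 0, 0]

lemma rowDegA0 : rowDeg Ax 0 = 0 := by
  apply Nat.sInf_eq_zero.mpr
  left
  refine ⟨0, ?_⟩
  rw [show Ax 0 0 = X 2 + 1 by simp [Ax], homogeneousComponent_zero]
  simp

lemma rowDegA1 : rowDeg Ax 1 = 0 := by
  apply Nat.sInf_eq_zero.mpr
  left
  refine ⟨1, ?_⟩
  rw [show Ax 1 1 = X 3 + 1 by simp [Ax], homogeneousComponent_zero]
  simp

lemma rowDegA2 : rowDeg Ax 2 = 1 := by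
  have mem1 : 1 ∈ {d | ∃ j, homogeneousComponent d (Ax 2 j) ≠ 0} := by
    refine ⟨0, ?_⟩
    rw [show Ax 2 0 = X 1 by simp [Ax], hcX', if_pos rfl]
    exact X_ne_zero _
  have h0 : 0 ∉ {d | ∃ j, homogeneousComponent d (Ax 2 j) ≠ 0} := by
    rintro ⟨j, hj⟩
    fin_cases j <;>
      simp [Ax, homogeneousComponent_zero, Matrix.vecHead, Matrix.vecTail] at hj
  have le1 : rowDeg Ax 2 ≤ 1 := Nat.sInf_le mem1
  have ne0 : rowDeg Ax 2 ≠ 0 := by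
    intro h
    rcases Nat.sInf_eq_zero.mp h with h | h
    · exact h0 h
    · rw [h] at mem1; exact mem1
  omega

lemma lowMatA : lowMat Ax =
    !![(1 : MvPolynomial (Fin 4) ℝ), 0, 0, 0;
       0, 1, 0, 0;
       X 1, X 0, 0, 0] := by
  ext l j
  have hl : lowMat Ax l j = homogeneousComponent (rowDeg Ax l) (Ax l j) := rfl
  rw [hl]
  fin_cases l
  · rw [show rowDeg Ax ⟨0, by omega⟩ = 0 from rowDegA0]
    fin_cases j <;>
      simp [Ax, hcX', homogeneousComponent_zero, Matrix.vecHead, Matrix.vecTail]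
  · rw [show rowDeg Ax ⟨1, by omega⟩ = 0 from rowDegA1]
    fin_cases j <;>
      simp [Ax, hcX', homogeneousComponent_zero, Matrix.vecHead, Matrix.vecTail]
  · rw [show rowDeg Ax ⟨2, by omega⟩ = 1 from rowDegA2]
    fin_cases j <;>
      simp [Ax, hcX', homogeneousComponent_zero, Matrix.vecHead, Matrix.vecTail]

lemma rankA : IsPolyRank
    (!![(1 : MvPolynomial (Fin 4) ℝ), 0, 0, 0;
        0, 1, 0, 0;
        X 1, X 0, 0, 0]) 2 := by
  constructor
  · refine ⟨![0, 1], ![0, 1], by decide, by decide, ?_⟩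
    rw [Matrix.det_fin_two]
    simp
  · apply notRank3'
    · intro l; fin_cases l <;> simp [Matrix.vecHead, Matrix.vecTail]
    · intro l; fin_cases l <;> simp [Matrix.vecHead, Matrix.vecTail]

end

/-- Example 2: FRALD-T fails. For `θ = (x,y,w,z)` (indexed `x = u 0`,
`y = u 1`, `w = u 2`, `z = u 3`), `θ̄ = (0,0,1,1)` and `g(θ) = (xy, xw, yz)ᵀ` with Jacobian `G`,
the FRALD-T property fails at `θ̄`: for every invertible real `3 × 3` matrix `S`, the
lowest-degree row matrix of `S·G(θ̄ + u)` has rank at most `2` as a polynomial matrix.  In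
particular, for the permutation `P` reordering the rows as `(2,3,1)`, the lowest-degree row
matrix of `P·G(θ̄ + u)` is `[[1,0,0,0],[0,1,0,0],[y,x,0,0]]`, whose rank as a polynomial
matrix is `2 < 3`. -/
theorem statement_13
    (g : Fin 3 → MvPolynomial (Fin 4) ℝ)
    (hgdef : g = ![MvPolynomial.X 0 * MvPolynomial.X 1, MvPolynomial.X 0 * MvPolynomial.X 2,
      MvPolynomial.X 1 * MvPolynomial.X 3])
    (θbar : Fin 4 → ℝ) (hθbar : θbar = ![0, 0, 1, 1])
    (Gs : Matrix (Fin 3) (Fin 4) (MvPolynomial (Fin 4) ℝ))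
    (hGs : Gs = jacMat (fun l => shiftPoly θbar (g l))) :
    -- FRALD-T fails: every nondegenerate transformation leaves the rank at most 2
    (∀ S : Matrix (Fin 3) (Fin 3) ℝ, IsUnit S.det →
      ¬ rankGe (lowMat (S.map MvPolynomial.C * Gs)) 3) ∧
    -- the echelon form obtained from the permutation (2,3,1)
    (lowMat (!![(0:ℝ),1,0; 0,0,1; 1,0,0].map MvPolynomial.C * Gs) =
      !![(1 : MvPolynomial (Fin 4) ℝ), 0, 0, 0;
         0, 1, 0, 0;
         MvPolynomial.X 1, MvPolynomial.X 0, 0, 0]) ∧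
    IsPolyRank
      (!![(1 : MvPolynomial (Fin 4) ℝ), 0, 0, 0;
          0, 1, 0, 0;
          MvPolynomial.X 1, MvPolynomial.X 0, 0, 0]) 2 := by
  subst hgdef hθbar
  have hG : Gs = Gsx := by
    rw [hGs]
    ext l j
    fin_cases l <;> fin_cases j <;>
      simp [jacMat, shiftPoly, Gsx, MvPolynomial.pderiv_mul, MvPolynomial.pderiv_X,
        Pi.single_apply, Matrix.vecHead, Matrix.vecTail]
  subst hG
  refine ⟨fun S _ => notRank3' (fun l => (key' S l).1) (fun l => (key' S l).2), ?_, rankA⟩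
  have hPG : (((!![(0:ℝ),1,0; 0,0,1; 1,0,0]).map MvPolynomial.C : Matrix (Fin 3) (Fin 3) (MvPolynomial (Fin 4) ℝ)) * Gsx) = Ax := by
    refine Matrix.ext fun l j => ?_
    fin_cases l <;> fin_cases j <;>
      simp [Gsx, Ax, Matrix.mul_apply, Fin.sum_univ_three, Matrix.vecHead, Matrix.vecTail]
  exact (congrArg lowMat hPG).trans lowMatA
end
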